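/- arXiv:1801.05536 — 4 statements merged into one kernel-verified Lean document; each statement's English description precedes it below -/
import Mathlib

section
/- For every integer d ≥ 1 there exists a finite solvable group G with derived length exactly d such that Ω(|G|) < (9 : ℝ)^((d+1)/5), where Ω(|G|) is the number of prime factors of |G| counted with multiplicity. -/
/-!
The witnesses are iterated wreath products with `AGL(2,3) = 𝔽₃² ⋊ GL(2,3)`, a group of order
`432 = 2⁴·3³` and derived length `5` acting on the `9` points of `𝔽₃²`: the permutational wreath
product `G ≀ AGL(2,3) = G⁹ ⋊ AGL(2,3)` has derived length `d(G) + 5`, and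
`Ω(|G ≀ AGL(2,3)|) = 9 Ω(|G|) + 7`. Thus `Ω + 7/8` is multiplied by `9` each time the derived
length grows by `5`, and starting from the trivial group, `C₂`, `S₃`, `S₄` and `GL(2,3)` (derived
lengths `0, …, 4`) it stays below `9^((d+1)/5)`.

The derived length of `G ≀ AGL(2,3)` is at least `d(G) + 5` because the base elements lying in
its fifth derived subgroup take every value `g ∈ G` at `0`. Indeed, commuting
`x ↦ g ^ c x` with `h⁻¹ ∈ AGL(2,3)^(k)` gives `x ↦ g ^ (c x - c (h • x))`, and five such
differences, along the translations (which lie in `AGL(2,3)^(4)`) and along `-1 ∈ AGL(2,3)^(3)`,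
turn the indicator of `0` into an exponent vector with value `-1` at `0`. Upper bounds on derived
lengths come from extensions: `(N ⋊ H)^(a+b) = 1` when `H^(a) = 1` and `N^(b) = 1`.
-/

open scoped commutatorElement

/-- `Omega n` is the number of prime factors of `n` counted with multiplicity,
usually denoted `Ω(n)`.  For a finite solvable group `G`, `Omega (Nat.card G)`
is the composition length of `G`. -/
def Omega (n : ℕ) : ℕ := n.primeFactorsList.length

/-- `DerivedLengthEq G d` says that the derived (solvable) length of `G` is exactly `d`:
the `d`-th term of the derived series is trivial and no earlier term is trivial. -/
def DerivedLengthEq (G : Type*) [Group G] (d : ℕ) : Prop :=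
  derivedSeries G d = ⊥ ∧ ∀ k < d, derivedSeries G k ≠ ⊥

section DerivedSeries

variable {G N Q : Type*} [Group G] [Group N] [Group Q]

theorem derivedSeries_add_le_map_derivedSeries (i : N →* G) {a : ℕ}
    (h : derivedSeries G a ≤ i.range) (b : ℕ) :
    derivedSeries G (a + b) ≤ (derivedSeries N b).map i := by
  induction b with
  | zero => simpa [← MonoidHom.range_eq_map] using h
  | succ b ih =>
    rw [← add_assoc, derivedSeries_succ, derivedSeries_succ, Subgroup.map_commutator]
    exact Subgroup.commutator_mono ih ih

theorem map_derivedSeries_le_derivedSeries_add (i : N →* G) {a : ℕ}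
    (h : i.range ≤ derivedSeries G a) (b : ℕ) :
    (derivedSeries N b).map i ≤ derivedSeries G (a + b) := by
  induction b with
  | zero => simpa [← MonoidHom.range_eq_map] using h
  | succ b ih =>
    rw [← add_assoc, derivedSeries_succ, derivedSeries_succ, Subgroup.map_commutator]
    exact Subgroup.commutator_mono ih ih

theorem derivedSeries_ne_bot_of_surjective {f : G →* Q} (hf : Function.Surjective f) {k : ℕ}
    (h : derivedSeries Q k ≠ ⊥) : derivedSeries G k ≠ ⊥ := by
  intro hG
  rw [← map_derivedSeries_eq hf, hG, Subgroup.map_bot] at h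
  exact h rfl

theorem derivedSeries_add_ne_bot {i : N →* G} (hi : Function.Injective i) {a b : ℕ}
    (hrange : i.range ≤ derivedSeries G a) {χ : N →* Q} (hχ : Function.Surjective χ)
    (hQ : derivedSeries Q b ≠ ⊥) : derivedSeries G (a + b) ≠ ⊥ := by
  intro hG
  have hN := map_derivedSeries_le_derivedSeries_add i hrange b
  rw [hG, le_bot_iff, Subgroup.map_eq_bot_iff_of_injective _ hi] at hN
  exact derivedSeries_ne_bot_of_surjective hχ hQ hN

theorem derivedSeries_pi_eq_bot {ι : Type*} {n : ℕ} (h : derivedSeries G n = ⊥) :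
    derivedSeries (ι → G) n = ⊥ := by
  refine eq_bot_iff.2 fun f hf => funext fun x => ?_
  have := map_derivedSeries_le_derivedSeries (Pi.evalMonoidHom (fun _ : ι => G) x) n
    (Subgroup.mem_map_of_mem _ hf)
  rwa [h, Subgroup.mem_bot] at this

theorem derivedSeries_succ_le_of_commutator_mem {K L : Subgroup G} {k : ℕ}
    (hK : derivedSeries G k ≤ K) (h : ∀ x ∈ K, ∀ y ∈ K, ⁅x, y⁆ ∈ L) :
    derivedSeries G (k + 1) ≤ L := by
  rw [derivedSeries_succ]
  exact (Subgroup.commutator_mono hK hK).trans (Subgroup.commutator_le.2 h)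

theorem derivedSeries_succ_eq_bot_of_le {K : Subgroup G} [IsMulCommutative K] {k : ℕ}
    (h : derivedSeries G k ≤ K) : derivedSeries G (k + 1) = ⊥ := by
  rw [derivedSeries_succ, eq_bot_iff,
    ← Subgroup.commutator_eq_bot_iff_le_centralizer.2 (Subgroup.le_centralizer K)]
  exact Subgroup.commutator_mono h h

theorem iterate_commutatorElement_conj_mem_derivedSeries (g a : G) (k : ℕ) :
    (fun x => ⁅x, g * x * g⁻¹⁆)^[k] a ∈ derivedSeries G k := by
  induction k with
  | zero => exact Subgroup.mem_top a
  | succ k ih =>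
    rw [Function.iterate_succ_apply', derivedSeries_succ]
    exact Subgroup.commutator_mem_commutator ih ((derivedSeries_normal G k).conj_mem _ ih g)

theorem derivedLengthEq_succ_iff {k : ℕ} :
    DerivedLengthEq G (k + 1) ↔ derivedSeries G (k + 1) = ⊥ ∧ derivedSeries G k ≠ ⊥ :=
  ⟨fun h => ⟨h.1, h.2 k k.lt_succ_self⟩, fun h => ⟨h.1, fun _ hj hbot =>
    h.2 (eq_bot_iff.2 (hbot ▸ derivedSeries_antitone G (Nat.le_of_lt_succ hj)))⟩⟩

theorem derivedLengthEq_succ_of_mem {k : ℕ} (h : derivedSeries G (k + 1) = ⊥) {x : G}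
    (hx : x ∈ derivedSeries G k) (hx1 : x ≠ 1) : DerivedLengthEq G (k + 1) :=
  derivedLengthEq_succ_iff.2 ⟨h, fun hbot => hx1 (by rwa [hbot, Subgroup.mem_bot] at hx)⟩

end DerivedSeries

namespace SemidirectProduct

variable {N G : Type*} [Group N] [Group G] {φ : G →* MulAut N}

theorem commutatorElement_inl_inr (n : N) (g : G) :
    ⁅(inl n : N ⋊[φ] G), (inr g : N ⋊[φ] G)⁆ = inl (n * (φ g n)⁻¹) := by
  ext <;> simp [commutatorElement_def]

theorem derivedSeries_add_eq_bot {a b : ℕ} (hG : derivedSeries G a = ⊥)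
    (hN : derivedSeries N b = ⊥) : derivedSeries (N ⋊[φ] G) (a + b) = ⊥ := by
  have h : derivedSeries (N ⋊[φ] G) a ≤ (inl : N →* N ⋊[φ] G).range := by
    rw [range_inl_eq_ker_rightHom, ← MonoidHom.comap_bot, ← Subgroup.map_le_iff_le_comap, ← hG]
    exact map_derivedSeries_le_derivedSeries _ a
  simpa [hN] using derivedSeries_add_le_map_derivedSeries inl h b

instance [Finite N] [Finite G] : Finite (N ⋊[φ] G) := Finite.of_equiv _ equivProd.symm

end SemidirectProduct

abbrev WreathProduct (G H X : Type*) [Group G] [Group H] [MulAction H X] :=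
  (X → G) ⋊[(mulAutArrow : H →* MulAut (X → G))] H

namespace WreathProduct

open SemidirectProduct

variable {G H X : Type*} [Group G] [Group H] [MulAction H X]

theorem card [Finite X] :
    Nat.card (WreathProduct G H X) = Nat.card G ^ Nat.card X * Nat.card H := by
  rw [SemidirectProduct.card, Nat.card_fun]

def smulDiff (h : H) (c : X → ℤ) : X → ℤ := fun x => c x - c (h • x)

theorem inl_zpow_smulDiff_mem {k : ℕ} {g : G} {c : X → ℤ}
    (hc : (inl fun x => g ^ c x : WreathProduct G H X) ∈ derivedSeries _ k) {h : H}
    (hh : h ∈ derivedSeries H k) :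
    (inl fun x => g ^ smulDiff h c x : WreathProduct G H X) ∈ derivedSeries _ (k + 1) := by
  have hinr : (inr h⁻¹ : WreathProduct G H X) ∈ derivedSeries _ k :=
    map_derivedSeries_le_derivedSeries inr k (Subgroup.mem_map_of_mem _ (inv_mem hh))
  have hdiff : (fun x => g ^ smulDiff h c x) =
      (fun x => g ^ c x) * (mulAutArrow h⁻¹ fun x => g ^ c x)⁻¹ := by
    funext x
    show g ^ (c x - c (h • x)) = g ^ c x * (g ^ c (h⁻¹⁻¹ • x))⁻¹
    rw [inv_inv, zpow_sub]
  rw [hdiff, ← commutatorElement_inl_inr, derivedSeries_succ]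
  exact Subgroup.commutator_mem_commutator hc hinr

theorem derivedSeries_add_ne_bot_of_exponent {m k : ℕ} {c : X → ℤ}
    (hc : ∀ g : G, (inl fun x => g ^ c x : WreathProduct G H X) ∈ derivedSeries _ m)
    {x₀ : X} (hx₀ : IsUnit (c x₀)) (hG : derivedSeries G k ≠ ⊥) :
    derivedSeries (WreathProduct G H X) (m + k) ≠ ⊥ := by
  let K := (derivedSeries (WreathProduct G H X) m).comap inl
  refine derivedSeries_add_ne_bot (i := inl.comp K.subtype)
    (χ := (Pi.evalMonoidHom _ x₀).comp K.subtype) ?_ ?_ ?_ hG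
  · exact inl_injective.comp Subtype.val_injective
  · rintro _ ⟨f, rfl⟩
    exact f.2
  · intro g
    refine ⟨⟨fun x => (g ^ c x₀) ^ c x, hc _⟩, ?_⟩
    simp [← zpow_mul, Int.isUnit_mul_self hx₀]

theorem derivedLengthEq_add {m d : ℕ} (hH : DerivedLengthEq H (m + 1))
    (hG : DerivedLengthEq G d) {c : X → ℤ}
    (hc : ∀ g : G, (inl fun x => g ^ c x : WreathProduct G H X) ∈ derivedSeries _ (m + 1))
    {x₀ : X} (hx₀ : IsUnit (c x₀)) : DerivedLengthEq (WreathProduct G H X) (m + 1 + d) := by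
  have hbot := SemidirectProduct.derivedSeries_add_eq_bot (φ := mulAutArrow) hH.1
    (derivedSeries_pi_eq_bot (ι := X) hG.1)
  cases d with
  | zero =>
    exact derivedLengthEq_succ_iff.2 ⟨hbot,
      derivedSeries_ne_bot_of_surjective rightHom_surjective (derivedLengthEq_succ_iff.1 hH).2⟩
  | succ d =>
    exact derivedLengthEq_succ_iff.2 ⟨hbot,
      derivedSeries_add_ne_bot_of_exponent hc hx₀ (derivedLengthEq_succ_iff.1 hG).2⟩

end WreathProduct

theorem Matrix.GeneralLinearGroup.val_commutatorElement {n R : Type*} [Fintype n]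
    [DecidableEq n] [CommRing R] {x y : GL n R} (hx : x.val.det = 1) (hy : y.val.det = 1) :
    (⁅x, y⁆ : GL n R).val = x.val * y.val * x.val.adjugate * y.val.adjugate := by
  simp [commutatorElement_def, Matrix.coe_units_inv, Matrix.inv_def, hx, hy]

local notation "M₂𝔽₃" => Matrix (Fin 2) (Fin 2) (ZMod 3)
local notation "GL₂𝔽₃" => GL (Fin 2) (ZMod 3)
local notation "𝔽₃²" => Fin 2 → ZMod 3

namespace GL23

set_option maxRecDepth 10000 in
theorem sq_commutator_eq_one_or_neg_one_of_det_eq_one :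
    ∀ A : M₂𝔽₃, A.det = 1 → ∀ B : M₂𝔽₃, B.det = 1 →
      (A * B * A.adjugate * B.adjugate) ^ 2 = 1 ∨ (A * B * A.adjugate * B.adjugate) ^ 2 = -1 := by
  simp only [Matrix.det_fin_two, Matrix.adjugate_fin_two]
  decide

set_option maxRecDepth 10000 in
theorem sq_mul_eq_one_or_neg_one :
    ∀ A : M₂𝔽₃, A.det = 1 → (A ^ 2 = 1 ∨ A ^ 2 = -1) → ∀ B : M₂𝔽₃, B.det = 1 →
      (B ^ 2 = 1 ∨ B ^ 2 = -1) → (A * B) ^ 2 = 1 ∨ (A * B) ^ 2 = -1 := by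
  simp only [Matrix.det_fin_two]
  decide

set_option maxRecDepth 10000 in
theorem commutator_eq_one_or_neg_one_of_sq :
    ∀ A : M₂𝔽₃, A.det = 1 → (A ^ 2 = 1 ∨ A ^ 2 = -1) → ∀ B : M₂𝔽₃, B.det = 1 →
      (B ^ 2 = 1 ∨ B ^ 2 = -1) →
      A * B * A.adjugate * B.adjugate = 1 ∨ A * B * A.adjugate * B.adjugate = -1 := by
  simp only [Matrix.det_fin_two, Matrix.adjugate_fin_two]
  decide

theorem sq_eq_one_or_neg_one_iff {x : GL₂𝔽₃} :
    x ^ 2 = 1 ∨ x ^ 2 = -1 ↔ x.val ^ 2 = 1 ∨ x.val ^ 2 = -1 := by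
  simp [Units.ext_iff]

-- In `SL(2,3)` the elements with `x ^ 2 = ±1` are those of `2`-power order: the subgroup `Q₈`.
def quaternionSubgroup : Subgroup GL₂𝔽₃ where
  carrier := {x | x.val.det = 1 ∧ (x ^ 2 = 1 ∨ x ^ 2 = -1)}
  one_mem' := ⟨by simp, Or.inl (one_pow 2)⟩
  mul_mem' := by
    rintro x y ⟨hx, hx2⟩ ⟨hy, hy2⟩
    rw [sq_eq_one_or_neg_one_iff] at hx2 hy2
    refine ⟨by simp [hx, hy], ?_⟩
    rw [sq_eq_one_or_neg_one_iff]
    exact sq_mul_eq_one_or_neg_one _ hx hx2 _ hy hy2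
  inv_mem' := by
    rintro x ⟨hx, hx2⟩
    refine ⟨by simp [Matrix.coe_units_inv, hx], ?_⟩
    rw [inv_pow]
    rcases hx2 with h | h <;> simp [h]

theorem mem_quaternionSubgroup {x : GL₂𝔽₃} :
    x ∈ quaternionSubgroup ↔ x.val.det = 1 ∧ (x.val ^ 2 = 1 ∨ x.val ^ 2 = -1) := by
  rw [← sq_eq_one_or_neg_one_iff]
  rfl

theorem derivedSeries_four : derivedSeries GL₂𝔽₃ 4 = ⊥ := by
  have h1 : derivedSeries GL₂𝔽₃ 1 ≤ Matrix.GeneralLinearGroup.det.ker :=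
    Abelianization.commutator_subset_ker _
  have h2 : derivedSeries GL₂𝔽₃ 2 ≤ quaternionSubgroup := by
    refine derivedSeries_succ_le_of_commutator_mem h1 fun x hx y hy => ?_
    rw [MonoidHom.mem_ker, Units.ext_iff, Matrix.GeneralLinearGroup.val_det_apply,
      Units.val_one] at hx hy
    rw [mem_quaternionSubgroup, Matrix.GeneralLinearGroup.val_commutatorElement hx hy]
    refine ⟨by simp [Matrix.det_adjugate, hx, hy], ?_⟩
    exact sq_commutator_eq_one_or_neg_one_of_det_eq_one _ hx _ hy
  have h3 : derivedSeries GL₂𝔽₃ 3 ≤ Subgroup.center GL₂𝔽₃ := by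
    refine derivedSeries_succ_le_of_commutator_mem h2 fun x hx y hy => ?_
    obtain ⟨hx, hx2⟩ := mem_quaternionSubgroup.1 hx
    obtain ⟨hy, hy2⟩ := mem_quaternionSubgroup.1 hy
    have hc := commutator_eq_one_or_neg_one_of_sq _ hx hx2 _ hy hy2
    rw [← Matrix.GeneralLinearGroup.val_commutatorElement hx hy, ← Units.val_one,
      ← Units.val_neg, ← Units.ext_iff, ← Units.ext_iff] at hc
    rcases hc with h | h <;> rw [h, Subgroup.mem_center_iff] <;> simp
  exact derivedSeries_succ_eq_bot_of_le h3

theorem neg_one_mem_derivedSeries_three : (-1 : GL₂𝔽₃) ∈ derivedSeries GL₂𝔽₃ 3 := by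
  have h : (fun x => ⁅x, (⟨!![1, 1; 0, 1], !![1, 2; 0, 1], by decide, by decide⟩ : GL₂𝔽₃) * x *
      (⟨!![1, 1; 0, 1], !![1, 2; 0, 1], by decide, by decide⟩ : GL₂𝔽₃)⁻¹⁆)^[3]
      ⟨!![0, 1; 1, 0], !![0, 1; 1, 0], by decide, by decide⟩ = -1 := by
    decide
  exact h ▸ iterate_commutatorElement_conj_mem_derivedSeries _ _ 3

theorem derivedLengthEq_four : DerivedLengthEq GL₂𝔽₃ 4 :=
  derivedLengthEq_succ_of_mem derivedSeries_four neg_one_mem_derivedSeries_three (by decide)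

end GL23

abbrev AGL23 : Type := Multiplicative 𝔽₃² ⋊[(MulAutMultiplicative 𝔽₃²).symm.toMonoidHom.comp
  (DistribMulAction.toAddAut GL₂𝔽₃ 𝔽₃²)] GL₂𝔽₃

namespace AGL23

open SemidirectProduct

instance : MulAction AGL23 𝔽₃² where
  smul h u := h.right • u + h.left.toAdd
  one_smul u := by
    show (1 : GL₂𝔽₃) • u + Multiplicative.toAdd 1 = u
    simp
  mul_smul h h' u := by
    show (h.right * h'.right) • u + (h.left.toAdd + h.right • h'.left.toAdd) =
      h.right • (h'.right • u + h'.left.toAdd) + h.left.toAdd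
    rw [smul_add, mul_smul]
    abel

theorem inl_mem_derivedSeries (v : Multiplicative 𝔽₃²) {k : ℕ} (hk : k ≤ 4) :
    (inl v : AGL23) ∈ derivedSeries AGL23 k := by
  induction k generalizing v with
  | zero => exact Subgroup.mem_top _
  | succ k ih =>
    have hneg : (inr (-1 : GL₂𝔽₃) : AGL23) ∈ derivedSeries AGL23 k :=
      map_derivedSeries_le_derivedSeries inr k (Subgroup.mem_map_of_mem _
        (derivedSeries_antitone _ (by omega : k ≤ 3) GL23.neg_one_mem_derivedSeries_three))
    -- `-1` acts on `𝔽₃²` by inversion, and `v⁻¹ * v⁻¹ = v` since `v ^ 3 = 1`.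
    have hcomm : ⁅(inl v⁻¹ : AGL23), (inr (-1 : GL₂𝔽₃) : AGL23)⁆ = inl v := by
      rw [commutatorElement_inl_inr]
      congr 1
      clear ih
      revert v
      decide
    rw [← hcomm, derivedSeries_succ]
    exact Subgroup.commutator_mem_commutator (ih _ (by omega)) hneg

theorem derivedLengthEq_five : DerivedLengthEq AGL23 5 :=
  derivedLengthEq_succ_of_mem
    (SemidirectProduct.derivedSeries_add_eq_bot GL23.derivedSeries_four
      ((derivedSeries_one _).trans (commutator_eq_bot _)))
    (inl_mem_derivedSeries (.ofAdd ![1, 0]) le_rfl) (by decide)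

theorem card : Nat.card AGL23 = 432 := by
  rw [SemidirectProduct.card, Matrix.card_GL_field]
  simp [ZMod.card, Fin.prod_univ_two]

open WreathProduct

def exponent : 𝔽₃² → ℤ :=
  smulDiff (inl (.ofAdd ![1, 0]) : AGL23) <| smulDiff (inr (-1) : AGL23) <|
    smulDiff (inl (.ofAdd ![1, 0]) : AGL23) <| smulDiff (inl (.ofAdd ![0, 1]) : AGL23) <|
    smulDiff (inl (.ofAdd ![0, 1]) : AGL23) fun x => if x = 0 then 1 else 0

set_option maxRecDepth 10000 in
theorem exponent_zero : exponent 0 = -1 := by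
  decide

theorem inl_zpow_exponent_mem {G : Type*} [Group G] (g : G) :
    (inl fun x => g ^ exponent x : WreathProduct G AGL23 𝔽₃²) ∈ derivedSeries _ 5 := by
  have hτ (v : Multiplicative 𝔽₃²) (k : ℕ) (hk : k ≤ 4) := inl_mem_derivedSeries v hk
  have hν : (inr (-1 : GL₂𝔽₃) : AGL23) ∈ derivedSeries AGL23 3 :=
    map_derivedSeries_le_derivedSeries inr 3
      (Subgroup.mem_map_of_mem _ GL23.neg_one_mem_derivedSeries_three)
  exact inl_zpow_smulDiff_mem (inl_zpow_smulDiff_mem (inl_zpow_smulDiff_mem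
    (inl_zpow_smulDiff_mem (inl_zpow_smulDiff_mem (Subgroup.mem_top _) (hτ _ 0 (by norm_num)))
    (hτ _ 1 (by norm_num))) (hτ _ 2 (by norm_num))) hν) (hτ _ 4 le_rfl)

theorem derivedLengthEq_wreathProduct {G : Type*} [Group G] {d : ℕ} (hG : DerivedLengthEq G d) :
    DerivedLengthEq (WreathProduct G AGL23 𝔽₃²) (5 + d) :=
  WreathProduct.derivedLengthEq_add derivedLengthEq_five hG inl_zpow_exponent_mem
    (x₀ := 0) (exponent_zero ▸ isUnit_one.neg)

end AGL23

open Equiv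

theorem Equiv.Perm.derivedSeries_one_add_eq_bot {α : Type*} [Fintype α] [DecidableEq α] {k : ℕ}
    (h : derivedSeries (alternatingGroup α) k = ⊥) : derivedSeries (Perm α) (1 + k) = ⊥ := by
  have h1 : derivedSeries (Perm α) 1 ≤ (alternatingGroup α).subtype.range := by
    rw [Subgroup.range_subtype]
    exact alternatingGroup.commutator_perm_le
  simpa [h] using derivedSeries_add_le_map_derivedSeries _ h1 k

theorem derivedLengthEq_perm_fin_three : DerivedLengthEq (Perm (Fin 3)) 2 := by
  have : IsMulCommutative (alternatingGroup (Fin 3)) :=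
    alternatingGroup.isMulCommutative_of_card_le_three (by simp)
  exact derivedLengthEq_succ_of_mem (Perm.derivedSeries_one_add_eq_bot (commutator_eq_bot _))
    (iterate_commutatorElement_conj_mem_derivedSeries (swap 1 2) (swap 0 1) 1) (by decide)

set_option maxRecDepth 10000 in
theorem derivedLengthEq_perm_fin_four : DerivedLengthEq (Perm (Fin 4)) 3 := by
  have : IsKleinFour (alternatingGroup.kleinFour (Fin 4)) :=
    alternatingGroup.kleinFour_isKleinFour (by simp)
  have : IsMulCommutative (alternatingGroup.kleinFour (Fin 4)) := IsKleinFour.isMulCommutative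
  have h2 : derivedSeries (alternatingGroup (Fin 4)) 2 = ⊥ :=
    derivedSeries_succ_eq_bot_of_le (K := alternatingGroup.kleinFour (Fin 4))
      (alternatingGroup.kleinFour_eq_commutator (by simp)).ge
  exact derivedLengthEq_succ_of_mem (Perm.derivedSeries_one_add_eq_bot h2)
    (iterate_commutatorElement_conj_mem_derivedSeries (swap 0 1 * swap 1 2) (swap 2 3) 2)
    (by decide)

theorem Omega_pow_mul {n m : ℕ} (k : ℕ) (hn : n ≠ 0) (hm : m ≠ 0) :
    Omega (n ^ k * m) = k * Omega n + Omega m := by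
  simp only [Omega, ← ArithmeticFunction.cardFactors_apply,
    ArithmeticFunction.cardFactors_mul (pow_ne_zero k hn) hm, ArithmeticFunction.cardFactors_pow]

-- The bound is `Ω + 7/8 ≤ 9^((d+1)/5)` with integer exponents.
theorem exists_derivedLengthEq_omega_le : ∀ d : ℕ, ∃ (G : Type) (_ : Group G) (_ : Finite G),
    DerivedLengthEq G d ∧ (8 * Omega (Nat.card G) + 7) ^ 5 ≤ 8 ^ 5 * 9 ^ (d + 1)
  | 0 => ⟨Unit, inferInstance, inferInstance, ⟨Subsingleton.elim _ _, nofun⟩, by simp [Omega]⟩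
  | 1 => ⟨Multiplicative (ZMod 2), inferInstance, inferInstance,
      derivedLengthEq_succ_of_mem (commutator_eq_bot _) (Subgroup.mem_top (.ofAdd 1)) (by decide),
      by simp [Omega]⟩
  | 2 => ⟨Perm (Fin 3), inferInstance, inferInstance, derivedLengthEq_perm_fin_three,
      by rw [Nat.card_perm]; simp [Omega, Nat.factorial]⟩
  | 3 => ⟨Perm (Fin 4), inferInstance, inferInstance, derivedLengthEq_perm_fin_four,
      by rw [Nat.card_perm]; simp [Omega, Nat.factorial]⟩
  | 4 => ⟨GL₂𝔽₃, inferInstance, inferInstance, GL23.derivedLengthEq_four, by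
      rw [Matrix.card_GL_field]
      simp [Omega, ZMod.card, Fin.prod_univ_two]⟩
  | d + 5 => by
    obtain ⟨G, _, _, hG, hbound⟩ := exists_derivedLengthEq_omega_le d
    refine ⟨WreathProduct G AGL23 𝔽₃², inferInstance, inferInstance,
      add_comm d 5 ▸ AGL23.derivedLengthEq_wreathProduct hG, ?_⟩
    rw [WreathProduct.card, AGL23.card, Nat.card_fun, Omega_pow_mul _ Nat.card_pos.ne' (by simp)]
    have h432 : Omega 432 = 7 := by simp [Omega]
    simp only [Nat.card_eq_fintype_card, Fintype.card_fin, ZMod.card, h432]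
    calc (8 * (3 ^ 2 * Omega (Nat.card G) + 7) + 7) ^ 5
        = 9 ^ 5 * (8 * Omega (Nat.card G) + 7) ^ 5 := by ring
      _ ≤ 9 ^ 5 * (8 ^ 5 * 9 ^ (d + 1)) := Nat.mul_le_mul_left _ hbound
      _ = 8 ^ 5 * 9 ^ (d + 5 + 1) := by ring

theorem cast_lt_nine_rpow_of_pow_le {n d : ℕ} (h : (8 * n + 7) ^ 5 ≤ 8 ^ 5 * 9 ^ (d + 1)) :
    (n : ℝ) < 9 ^ (((d : ℝ) + 1) / 5) := by
  have h9 : ((9 : ℝ) ^ (((d : ℝ) + 1) / 5)) ^ 5 = 9 ^ (d + 1) := by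
    rw [← Real.rpow_natCast, ← Real.rpow_mul (by norm_num), Nat.cast_ofNat,
      div_mul_cancel₀ _ (by norm_num)]
    exact_mod_cast Real.rpow_natCast 9 (d + 1)
  have h' : (((8 * n + 7 : ℕ) : ℝ) / 8) ^ 5 ≤ ((9 : ℝ) ^ (((d : ℝ) + 1) / 5)) ^ 5 := by
    rw [h9, div_pow, div_le_iff₀ (by norm_num)]
    exact_mod_cast h.trans_eq (mul_comm _ _)
  have := le_of_pow_le_pow_left₀ (by norm_num) (by positivity) h'
  push_cast at this
  linarith

theorem exists_solvable_comp_length_lt_general (d : ℕ) :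
    ∃ (G : Type) (_ : Group G) (_ : Finite G), IsSolvable G ∧ DerivedLengthEq G d ∧
      (Omega (Nat.card G) : ℝ) < (9 : ℝ) ^ (((d : ℝ) + 1) / 5) := by
  obtain ⟨G, _, _, hG, hbound⟩ := exists_derivedLengthEq_omega_le d
  exact ⟨G, inferInstance, inferInstance, ⟨d, hG.1⟩, hG, cast_lt_nine_rpow_of_pow_le hbound⟩

/-- For every `d ≥ 1` there is a finite solvable group `G` of derived length exactly `d`
with `Ω(|G|) < 9^((d+1)/5)`. -/
theorem exists_solvable_comp_length_lt (d : ℕ) (hd : 1 ≤ d) :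
    ∃ (G : Type) (_ : Group G) (_ : Finite G), IsSolvable G ∧ DerivedLengthEq G d ∧
      (Omega (Nat.card G) : ℝ) < (9 : ℝ) ^ (((d : ℝ) + 1) / 5) :=
  exists_solvable_comp_length_lt_general d
end

section
/- Let G be a nontrivial finite solvable group with derived length d such that Ω(|G|) ≤ Ω(|H|) for every finite solvable group H with derived length d (i.e., G has minimal composition length among solvable groups of derived length d). Then for every nontrivial normal subgroup N of G, the derived length of G/N is strictly less than d. -/
theorem Omega_eq_cardFactors (n : ℕ) : Omega n = ArithmeticFunction.cardFactors n :=
  ArithmeticFunction.cardFactors_apply.symm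

theorem derivedSeries_eq_bot_of_surjective {G H : Type*} [Group G] [Group H] {f : G →* H}
    (hf : Function.Surjective f) {n : ℕ} (h : derivedSeries G n = ⊥) :
    derivedSeries H n = ⊥ := by
  rw [← map_derivedSeries_eq hf, h, Subgroup.map_bot]

theorem Omega_card_quotient_lt {G : Type*} [Group G] [Finite G] {N : Subgroup G} (hN : N ≠ ⊥) :
    Omega (Nat.card (G ⧸ N)) < Omega (Nat.card G) := by
  have hcard : 1 < Nat.card N := (Subgroup.one_lt_card_iff_ne_bot N).mpr hN
  rw [Subgroup.card_eq_card_quotient_mul_card_subgroup N, Omega_eq_cardFactors,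
    Omega_eq_cardFactors, ArithmeticFunction.cardFactors_mul Nat.card_pos.ne' Nat.card_pos.ne']
  exact Nat.lt_add_of_pos_right (ArithmeticFunction.cardFactors_pos_iff_one_lt.mpr hcard)

theorem quotient_derived_length_lt_of_minimal_general (G : Type) [Group G] [Finite G]
    (d : ℕ) (hd : DerivedLengthEq G d)
    (hmin : ∀ (H : Type) [Group H] [Finite H], IsSolvable H → DerivedLengthEq H d →
      Omega (Nat.card G) ≤ Omega (Nat.card H))
    (N : Subgroup G) [N.Normal] (hN : N ≠ ⊥) :
    ∃ k < d, derivedSeries (G ⧸ N) k = ⊥ := by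
  by_contra! h
  have hQ : DerivedLengthEq (G ⧸ N) d :=
    ⟨derivedSeries_eq_bot_of_surjective (QuotientGroup.mk'_surjective N) hd.1, h⟩
  exact (Omega_card_quotient_lt hN).not_ge (hmin (G ⧸ N) ⟨⟨d, hQ.1⟩⟩ hQ)

/-- If `G` is a nontrivial finite solvable group of derived length `d` with minimal
composition length among all finite solvable groups of derived length `d`, then for every
nontrivial normal subgroup `N` of `G` the derived length of `G/N` is strictly less
than `d`. -/
theorem quotient_derived_length_lt_of_minimal (G : Type) [Group G] [Finite G] [Nontrivial G]
    (hG : IsSolvable G) (d : ℕ) (hd : DerivedLengthEq G d)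
    (hmin : ∀ (H : Type) [Group H] [Finite H], IsSolvable H → DerivedLengthEq H d →
      Omega (Nat.card G) ≤ Omega (Nat.card H))
    (N : Subgroup G) [N.Normal] (hN : N ≠ ⊥) :
    ∃ k < d, derivedSeries (G ⧸ N) k = ⊥ :=
  quotient_derived_length_lt_of_minimal_general G d hd hmin N hN
end

section
/- Every nontrivial finite nilpotent group G with derived length d satisfies 2^(d−1) ≤ Ω(|G|), where Ω(|G|) is the number of prime factors of |G| counted with multiplicity. -/
/-!
Indexing the lower central series from `γ 0 = G`, the three subgroups lemma gives
`⁅γ m, γ n⁆ ≤ γ (m + n + 1)`, so by induction `G⁽ⁱ⁾ ≤ γ (2 ^ i - 1)`. Hence if `G` has derived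
length `d`, then `γ (2 ^ (d - 1) - 1) ≠ ⊥` and the nilpotency class `c` is at least `2 ^ (d - 1)`.
Finally the upper central series `1 = Z 0 < Z 1 < ⋯ < Z c = G` is strictly increasing, and each
proper inclusion of subgroups adds at least one prime factor to the order, so `c ≤ Ω |G|`.
-/

open Subgroup ArithmeticFunction
open scoped ArithmeticFunction.Omega

theorem ArithmeticFunction.cardFactors_lt_of_dvd_of_ne {a b : ℕ} (hb : b ≠ 0) (hab : a ∣ b)
    (hne : a ≠ b) : Ω a < Ω b := by
  obtain ⟨c, rfl⟩ := hab
  have ha : a ≠ 0 := left_ne_zero_of_mul hb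
  have hc : c ≠ 0 := right_ne_zero_of_mul hb
  have hc1 : 1 < c := Nat.one_lt_iff_ne_zero_and_ne_one.mpr ⟨hc, by rintro rfl; simp at hne⟩
  rw [cardFactors_mul ha hc]
  have := cardFactors_pos_iff_one_lt.mpr hc1
  omega

namespace Subgroup

variable {G : Type*} [Group G]

theorem cardFactors_card_lt_of_lt [Finite G] {H K : Subgroup G} (h : H < K) :
    Ω (Nat.card H) < Ω (Nat.card K) :=
  cardFactors_lt_of_dvd_of_ne Nat.card_pos.ne' (card_dvd_of_le h.le)
    fun he => h.ne (eq_of_le_of_card_ge h.le he.ge)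

theorem le_cardFactors_card_of_strictMonoOn [Finite G] {f : ℕ → Subgroup G} {n : ℕ}
    (hf : StrictMonoOn f (Set.Iic n)) : n ≤ Ω (Nat.card (f n)) := by
  induction n with
  | zero => exact Nat.zero_le _
  | succ n ih =>
    have hle : n ≤ Ω (Nat.card (f n)) :=
      ih (hf.mono (Set.Iic_subset_Iic.mpr n.le_succ))
    have hlt : Ω (Nat.card (f n)) < Ω (Nat.card (f (n + 1))) :=
      cardFactors_card_lt_of_lt (hf (by simp) (by simp) n.lt_succ_self)
    omega

/-- The three subgroups lemma modulo a normal subgroup. -/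
theorem commutator_commutator_le_of_rotate {A B C N : Subgroup G} [N.Normal]
    (h1 : ⁅⁅B, C⁆, A⁆ ≤ N) (h2 : ⁅⁅C, A⁆, B⁆ ≤ N) : ⁅⁅A, B⁆, C⁆ ≤ N := by
  let π := QuotientGroup.mk' N
  have le_iff : ∀ X Y Z : Subgroup G,
      ⁅⁅X, Y⁆, Z⁆ ≤ N ↔ ⁅⁅X.map π, Y.map π⁆, Z.map π⁆ = ⊥ := fun X Y Z => by
    rw [← map_commutator, ← map_commutator, map_eq_bot_iff, QuotientGroup.ker_mk']
  rw [le_iff] at h1 h2 ⊢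
  exact commutator_commutator_eq_bot_of_rotate h1 h2

theorem commutator_lowerCentralSeries_le (m n : ℕ) :
    ⁅(⊤ : Subgroup G).lowerCentralSeries m, (⊤ : Subgroup G).lowerCentralSeries n⁆ ≤
      (⊤ : Subgroup G).lowerCentralSeries (m + n + 1) := by
  induction n generalizing m with
  | zero => exact commutator_mono le_rfl le_top
  | succ n ih =>
    rw [lowerCentralSeries_succ, commutator_comm]
    apply commutator_commutator_le_of_rotate
    · calc ⁅⁅⊤, (⊤ : Subgroup G).lowerCentralSeries m⁆, (⊤ : Subgroup G).lowerCentralSeries n⁆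
          = ⁅(⊤ : Subgroup G).lowerCentralSeries (m + 1), (⊤ : Subgroup G).lowerCentralSeries n⁆ := by
            rw [lowerCentralSeries_succ, commutator_comm ((⊤ : Subgroup G).lowerCentralSeries m)]
        _ ≤ (⊤ : Subgroup G).lowerCentralSeries (m + (n + 1) + 1) := by
            simpa only [show m + 1 + n = m + (n + 1) by omega] using ih (m + 1)
    · calc ⁅⁅(⊤ : Subgroup G).lowerCentralSeries m, (⊤ : Subgroup G).lowerCentralSeries n⁆, ⊤⁆
          ≤ ⁅(⊤ : Subgroup G).lowerCentralSeries (m + n + 1), ⊤⁆ := commutator_mono (ih m) le_rfl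
        _ = (⊤ : Subgroup G).lowerCentralSeries (m + (n + 1) + 1) := by
            rw [← lowerCentralSeries_succ, ← Nat.add_assoc]

theorem derivedSeries_le_lowerCentralSeries_two_pow_sub_one (i : ℕ) :
    derivedSeries G i ≤ (⊤ : Subgroup G).lowerCentralSeries (2 ^ i - 1) := by
  induction i with
  | zero => simp
  | succ i ih =>
    calc derivedSeries G (i + 1) = ⁅derivedSeries G i, derivedSeries G i⁆ := rfl
      _ ≤ (⊤ : Subgroup G).lowerCentralSeries (2 ^ i - 1 + (2 ^ i - 1) + 1) :=
        (commutator_mono ih ih).trans (commutator_lowerCentralSeries_le _ _)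
      _ = (⊤ : Subgroup G).lowerCentralSeries (2 ^ (i + 1) - 1) := by
        have := Nat.one_le_two_pow (n := i)
        congr 1
        rw [Nat.pow_succ]
        omega

end Subgroup

theorem Group.nilpotencyClass_le_cardFactors_card (G : Type*) [Group G] [Finite G]
    [Group.IsNilpotent G] : Group.nilpotencyClass G ≤ Ω (Nat.card G) := by
  simpa using le_cardFactors_card_of_strictMonoOn (Subgroup.upperCentralSeries.StrictMonoOn G)

theorem DerivedLengthEq.derivedSeries_pred_ne_bot {G : Type*} [Group G] [Nontrivial G] {d : ℕ}
    (hd : DerivedLengthEq G d) : derivedSeries G (d - 1) ≠ ⊥ := by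
  rcases Nat.eq_zero_or_pos d with rfl | hpos
  · exact top_ne_bot
  · exact hd.2 (d - 1) (Nat.sub_lt hpos Nat.one_pos)

/-- Every nontrivial finite nilpotent group `G` with derived length `d` satisfies
`2^(d−1) ≤ Ω(|G|)`. -/
theorem nilpotent_comp_length_ge (G : Type*) [Group G] [Finite G] [Nontrivial G]
    (hG : Group.IsNilpotent G) (d : ℕ) (hd : DerivedLengthEq G d) :
    2 ^ (d - 1) ≤ Omega (Nat.card G) := by
  have hlcs : (⊤ : Subgroup G).lowerCentralSeries (2 ^ (d - 1) - 1) ≠ ⊥ := fun h =>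
    hd.derivedSeries_pred_ne_bot <|
      le_bot_iff.mp (h ▸ derivedSeries_le_lowerCentralSeries_two_pow_sub_one (d - 1))
  have hclass : 2 ^ (d - 1) - 1 < Group.nilpotencyClass G := by
    simpa [Subgroup.lowerCentralSeries_eq_bot_iff_nilpotencyClass_le] using hlcs
  have hclass_le := Group.nilpotencyClass_le_cardFactors_card G
  have hpow := Nat.one_le_two_pow (n := d - 1)
  rw [Omega, ← cardFactors_apply]
  omega
end

section
/- Let p be a prime and n ≥ 2 an integer, and let Uₙ be the group of n×n upper unitriangular matrices over the field F_p (upper triangular matrices with all diagonal entries equal to 1). Then Uₙ has order p^(n(n−1)/2), so composition length n(n−1)/2, and derived length exactly ⌊log₂(n−1)⌋ + 1. -/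
section
variable (p n : ℕ) [Fact p.Prime]

/-- membership predicate: unitriangular -/
def IsUnitriangular {n : ℕ} {R : Type*} [CommRing R] (M : Matrix (Fin n) (Fin n) R) : Prop :=
  (∀ i, M i i = 1) ∧ ∀ i j : Fin n, j < i → M i j = 0

theorem IsUnitriangular.mul {n : ℕ} {R : Type*} [CommRing R]
    {A B : Matrix (Fin n) (Fin n) R} (hA : IsUnitriangular A) (hB : IsUnitriangular B) :
    IsUnitriangular (A * B) := by
  obtain ⟨hA1, hA2⟩ := hA
  obtain ⟨hB1, hB2⟩ := hB
  constructor
  · intro i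
    rw [Matrix.mul_apply, Finset.sum_eq_single i]
    · rw [hA1 i, hB1 i, one_mul]
    · intro k _ hk
      rcases lt_or_gt_of_ne hk with h | h
      · rw [hA2 i k h, zero_mul]
      · rw [hB2 k i h, mul_zero]
    · intro h
      exact absurd (Finset.mem_univ i) h
  · intro i j hji
    rw [Matrix.mul_apply]
    apply Finset.sum_eq_zero
    intro k _
    rcases lt_or_ge k i with h | h
    · rw [hA2 i k h, zero_mul]
    · rw [hB2 k j (lt_of_lt_of_le hji h), mul_zero]

/-- The group of upper unitriangular n×n matrices over F_p, as a subgroup of GL(n, F_p). -/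
def unitriangularGroup : Subgroup (GL (Fin n) (ZMod p)) where
  carrier := {M | IsUnitriangular M.val}
  one_mem' := by
    constructor
    · intro i; simp
    · intro i j hji
      have : i ≠ j := (ne_of_lt hji).symm
      simp [Matrix.one_apply, this]
  mul_mem' := fun {a b} ha hb => by
    have : (a * b).val = a.val * b.val := rfl
    show IsUnitriangular (a * b).val
    rw [this]
    exact IsUnitriangular.mul ha hb
  inv_mem' := fun {x} hx => by
    have hpow : ∀ m : ℕ, IsUnitriangular ((x ^ m).val) := by
      intro m
      induction m with
      | zero =>
        constructor
        · intro i; simp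
        · intro i j hji
          have : i ≠ j := (ne_of_lt hji).symm
          simp [Matrix.one_apply, this]
      | succ m ih =>
        have : (x ^ (m + 1)).val = (x ^ m).val * x.val := by
          rw [pow_succ, Units.val_mul]
        show IsUnitriangular ((x ^ (m+1)).val)
        rw [this]
        exact IsUnitriangular.mul ih hx
    have hfin : 0 < orderOf x := orderOf_pos x
    have hinv : x⁻¹ = x ^ (orderOf x - 1) := by
      rw [inv_eq_iff_mul_eq_one, ← pow_succ', Nat.sub_add_cancel hfin]
      exact pow_orderOf_eq_one x
    show IsUnitriangular (x⁻¹).val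
    rw [hinv]
    exact hpow _

end

open Matrix
open scoped commutatorElement

namespace Matrix

variable {n : ℕ} {R : Type*}

/-- The `0`-th superdiagonal is the main diagonal: `VanishesBelowSuperdiag 0` means upper
triangular, `VanishesBelowSuperdiag 1` strictly upper triangular. -/
def VanishesBelowSuperdiag [Zero R] (m : ℕ) (X : Matrix (Fin n) (Fin n) R) : Prop :=
  ∀ i j : Fin n, (j : ℕ) < i + m → X i j = 0

namespace VanishesBelowSuperdiag

variable {m m' : ℕ} {X Y : Matrix (Fin n) (Fin n) R}

theorem mono [Zero R] (h : m' ≤ m) (hX : VanishesBelowSuperdiag m X) :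
    VanishesBelowSuperdiag m' X :=
  fun i j hij => hX i j (by omega)

theorem zero [Zero R] (m : ℕ) : VanishesBelowSuperdiag m (0 : Matrix (Fin n) (Fin n) R) :=
  fun _ _ _ => zero_apply _ _

theorem one [Zero R] [One R] : VanishesBelowSuperdiag 0 (1 : Matrix (Fin n) (Fin n) R) :=
  fun _ _ hij => one_apply_ne (Fin.ne_of_gt hij)

theorem add [AddZeroClass R] (hX : VanishesBelowSuperdiag m X)
    (hY : VanishesBelowSuperdiag m Y) : VanishesBelowSuperdiag m (X + Y) :=
  fun i j h => by rw [add_apply, hX i j h, hY i j h, add_zero]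

theorem neg [NegZeroClass R] (hX : VanishesBelowSuperdiag m X) :
    VanishesBelowSuperdiag m (-X) :=
  fun i j h => by rw [neg_apply, hX i j h, neg_zero]

theorem sub [AddGroup R] (hX : VanishesBelowSuperdiag m X)
    (hY : VanishesBelowSuperdiag m Y) : VanishesBelowSuperdiag m (X - Y) :=
  fun i j h => by rw [Matrix.sub_apply, hX i j h, hY i j h, sub_zero]

theorem mul [NonUnitalNonAssocSemiring R] (hX : VanishesBelowSuperdiag m X)
    (hY : VanishesBelowSuperdiag m' Y) : VanishesBelowSuperdiag (m + m') (X * Y) := by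
  intro i j h
  rw [mul_apply]
  refine Finset.sum_eq_zero fun k _ => ?_
  rcases lt_or_ge (k : ℕ) (i + m) with hk | hk
  · rw [hX i k hk, zero_mul]
  · rw [hY k j (by omega), mul_zero]

theorem pow [Semiring R] (hX : VanishesBelowSuperdiag m X) (k : ℕ) :
    VanishesBelowSuperdiag (k * m) (X ^ k) := by
  induction k with
  | zero => simpa using one
  | succ k ih => simpa [pow_succ, add_mul] using ih.mul hX

theorem eq_zero [Zero R] (h : n ≤ m) (hX : VanishesBelowSuperdiag m X) : X = 0 :=
  ext fun i j => hX i j (by omega)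

theorem isNilpotent [Semiring R] (hX : VanishesBelowSuperdiag 1 X) : IsNilpotent X :=
  ⟨n, (hX.pow n).eq_zero (by simp)⟩

theorem of_sub_one [AddGroupWithOne R] (hX : VanishesBelowSuperdiag m (X - 1)) :
    VanishesBelowSuperdiag 0 X := by
  simpa using (hX.mono m.zero_le).add one

theorem mul_sub_one [Ring R] (hX : VanishesBelowSuperdiag m (X - 1))
    (hY : VanishesBelowSuperdiag m (Y - 1)) : VanishesBelowSuperdiag m (X * Y - 1) := by
  have h : X * Y - 1 = (X - 1) * (Y - 1) + ((X - 1) + (Y - 1)) := by noncomm_ring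
  rw [h]
  exact ((hX.mul hY).mono (by omega)).add (hX.add hY)

theorem iff_blockTriangular [Zero R] :
    VanishesBelowSuperdiag 0 X ↔ X.BlockTriangular Fin.val :=
  ⟨fun hX _ _ h => hX _ _ h, fun hX _ _ h => hX h⟩

theorem inv [CommRing R] (hX : VanishesBelowSuperdiag 0 X) : VanishesBelowSuperdiag 0 X⁻¹ := by
  by_cases hdet : IsUnit X.det
  · let := invertibleOfIsUnitDet X hdet
    exact iff_blockTriangular.2 (blockTriangular_inv_of_blockTriangular
      (iff_blockTriangular.1 hX))
  · simpa [nonsing_inv_apply_not_isUnit X hdet] using zero 0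

theorem inv_sub_one [CommRing R] (hX : VanishesBelowSuperdiag m (X - 1)) (hdet : IsUnit X.det) :
    VanishesBelowSuperdiag m (X⁻¹ - 1) := by
  have h : X⁻¹ - 1 = -(X⁻¹ * (X - 1)) := by
    rw [mul_sub, nonsing_inv_mul X hdet, mul_one, neg_sub]
  rw [h]
  simpa using (hX.of_sub_one.inv.mul hX).neg

end VanishesBelowSuperdiag

variable {ι R : Type*} [Fintype ι] [DecidableEq ι] [CommRing R]

def transvectionUnit {i j : ι} (h : i ≠ j) (c : R) : GL ι R where
  val := transvection i j c
  inv := transvection i j (-c)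
  val_inv := by rw [transvection_mul_transvection_same _ _ h, add_neg_cancel, transvection_zero]
  inv_val := by rw [transvection_mul_transvection_same _ _ h, neg_add_cancel, transvection_zero]

theorem commutatorElement_transvectionUnit {i m j : ι} (him : i ≠ m) (hmj : m ≠ j)
    (hij : i ≠ j) (a b : R) :
    ⁅transvectionUnit him a, transvectionUnit hmj b⁆ = transvectionUnit hij (a * b) := by
  ext : 1
  simp only [transvectionUnit, transvection, commutatorElement_def, Units.inv_mk, Units.val_mul,
    Matrix.mul_add, mul_one, Matrix.add_mul, one_mul, single_mul_single_same, ne_eq, him.symm,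
    not_false_eq_true, single_mul_single_of_ne, add_zero, hij.symm, mul_neg, hmj.symm, neg_mul,
    neg_neg]
  simp only [← single_neg]
  abel

end Matrix

theorem isUnitriangular_iff_vanishesBelowSuperdiag {R : Type*} [CommRing R] {n : ℕ}
    {M : Matrix (Fin n) (Fin n) R} :
    IsUnitriangular M ↔ VanishesBelowSuperdiag 1 (M - 1) := by
  refine ⟨fun ⟨hdiag, hlower⟩ i j hij => ?_, fun hM => ⟨fun i => ?_, fun i j hji => ?_⟩⟩
  · rcases (Nat.lt_succ_iff_lt_or_eq.1 hij) with hji | hji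
    · rw [Matrix.sub_apply, hlower i j hji, one_apply_ne (Fin.ne_of_gt hji), sub_zero]
    · rw [Fin.ext hji, Matrix.sub_apply, hdiag i, one_apply_eq, sub_self]
  · simpa [sub_eq_zero] using hM i i (by omega)
  · simpa [one_apply_ne (Fin.ne_of_gt hji)] using hM i j (by have := Fin.lt_def.1 hji; omega)

theorem Units.val_commutatorElement_sub_one {A : Type*} [Ring A] (x y : Aˣ) :
    (↑⁅x, y⁆ : A) - 1 = (x * y - y * x) * ↑(x⁻¹ * y⁻¹) := by
  simp only [commutatorElement_def, Units.val_mul, sub_mul, mul_assoc]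
  rw [← mul_assoc (x : A) (x⁻¹ : Aˣ), Units.mul_inv, one_mul, Units.mul_inv]

section Filtration

variable (R : Type*) [CommRing R] (n : ℕ)

def unitriangularFiltration (m : ℕ) : Subgroup (GL (Fin n) R) where
  carrier := {M | VanishesBelowSuperdiag m ((M : Matrix (Fin n) (Fin n) R) - 1)}
  one_mem' := by simpa using VanishesBelowSuperdiag.zero m
  mul_mem' hA hB := hA.mul_sub_one hB
  inv_mem' {A} hA := by
    change VanishesBelowSuperdiag m ((↑A⁻¹ : Matrix (Fin n) (Fin n) R) - 1)
    rw [coe_units_inv]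
    exact hA.inv_sub_one (A.isUnit.map detMonoidHom)

noncomputable def unitriangularEquivStrictUpper :
    unitriangularFiltration R n 1 ≃
      {X : Matrix (Fin n) (Fin n) R // VanishesBelowSuperdiag 1 X} where
  toFun M := ⟨M.1 - 1, M.2⟩
  invFun X := ⟨X.2.isNilpotent.isUnit_one_add.unit, by
    simpa [unitriangularFiltration] using X.2⟩
  left_inv M := by ext : 2; simp
  right_inv X := by ext : 1; simp

def strictUpperEquivFun :
    {X : Matrix (Fin n) (Fin n) R // VanishesBelowSuperdiag 1 X} ≃
      ({q : Fin n × Fin n // q.1 < q.2} → R) where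
  toFun X q := X.1 q.1.1 q.1.2
  invFun f := ⟨of fun i j => if h : i < j then f ⟨(i, j), h⟩ else 0, fun i j hij => by
    simp [show ¬ i < j from fun h => by have := Fin.lt_def.1 h; omega]⟩
  left_inv X := by
    ext i j
    by_cases h : i < j
    · simp [h]
    · simp [h, X.2 i j (by have := Fin.not_lt.1 h; omega)]
  right_inv f := by ext q; simp [q.2]

theorem card_unitriangularFiltration_one :
    Nat.card (unitriangularFiltration R n 1) = Nat.card R ^ (n * (n - 1) / 2) := by
  rw [Nat.card_congr ((unitriangularEquivStrictUpper R n).trans (strictUpperEquivFun R n)),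
    Nat.card_fun, Nat.card_eq_fintype_card (α := {q : Fin n × Fin n // q.1 < q.2}),
    Fintype.card_subtype, Fintype.card_product_filter_lt, Fintype.card_fin, Nat.choose_two_right]

end Filtration

section DerivedSeries

variable {R : Type*} [CommRing R] {n : ℕ}

theorem commutatorElement_mem_unitriangularFiltration {a b : ℕ} {x y : GL (Fin n) R}
    (hx : x ∈ unitriangularFiltration R n a) (hy : y ∈ unitriangularFiltration R n b) :
    ⁅x, y⁆ ∈ unitriangularFiltration R n (a + b) := by
  have hcomm : (x * y - y * x : Matrix (Fin n) (Fin n) R) =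
      (x - 1) * (y - 1) - (y - 1) * (x - 1) := by
    noncomm_ring
  change VanishesBelowSuperdiag (a + b) ((↑⁅x, y⁆ : Matrix (Fin n) (Fin n) R) - 1)
  rw [Units.val_commutatorElement_sub_one, hcomm]
  exact ((hx.mul hy).sub ((hy.mul hx).mono (by omega))).mul
    ((inv_mem hx).of_sub_one.mul (inv_mem hy).of_sub_one)

theorem unitriangularFiltration_eq_bot {m : ℕ} (h : n ≤ m) :
    unitriangularFiltration R n m = ⊥ :=
  eq_bot_iff.2 fun _ hM => Subgroup.mem_bot.2 (Units.ext (sub_eq_zero.1 (hM.eq_zero h)))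

theorem transvectionUnit_mem_unitriangularFiltration {m : ℕ} {i j : Fin n} (hij : i ≠ j)
    (h : (i : ℕ) + m ≤ j) (c : R) : transvectionUnit hij c ∈ unitriangularFiltration R n m :=
  fun a b hab => by
    change (transvection i j c - 1) a b = 0
    rw [transvection, add_sub_cancel_left, single_apply_of_ne]
    rintro ⟨rfl, rfl⟩
    omega

theorem map_subtype_derivedSeries_le (k : ℕ) :
    (derivedSeries (unitriangularFiltration R n 1) k).map (unitriangularFiltration R n 1).subtype
      ≤ unitriangularFiltration R n (2 ^ k) := by
  induction k with
  | zero => simpa using Subgroup.map_subtype_le ⊤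
  | succ k ih =>
    rw [derivedSeries_succ, Subgroup.map_commutator, Subgroup.commutator_le, pow_succ, mul_two]
    exact fun x hx y hy => commutatorElement_mem_unitriangularFiltration (ih hx) (ih hy)

theorem transvectionUnit_mem_map_subtype_derivedSeries (k : ℕ) {i j : Fin n} (hij : i ≠ j)
    (h : (i : ℕ) + 2 ^ k ≤ j) (c : R) :
    transvectionUnit hij c ∈ (derivedSeries (unitriangularFiltration R n 1) k).map
      (unitriangularFiltration R n 1).subtype := by
  induction k generalizing i j c with
  | zero =>
    exact ⟨⟨_, transvectionUnit_mem_unitriangularFiltration hij h c⟩, Subgroup.mem_top _,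
      rfl⟩
  | succ k ih =>
    rw [pow_succ, mul_two] at h
    let l : Fin n := ⟨i + 2 ^ k, by omega⟩
    have hil : i ≠ l := Fin.ne_of_lt (Nat.lt_add_of_pos_right (Nat.two_pow_pos k))
    have hlj : l ≠ j :=
      Fin.ne_of_lt (by change (i : ℕ) + 2 ^ k < j; have := Nat.two_pow_pos k; omega)
    rw [← mul_one c, ← commutatorElement_transvectionUnit hil hlj hij, derivedSeries_succ,
      Subgroup.map_commutator]
    exact Subgroup.commutator_mem_commutator (ih hil le_rfl c)
      (ih hlj (by change (i : ℕ) + 2 ^ k + 2 ^ k ≤ j; omega) 1)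

theorem derivedSeries_unitriangularFiltration_eq_bot {k : ℕ} (h : n ≤ 2 ^ k) :
    derivedSeries (unitriangularFiltration R n 1) k = ⊥ := by
  rw [← Subgroup.map_eq_bot_iff_of_injective _ (Subgroup.subtype_injective _), eq_bot_iff,
    ← unitriangularFiltration_eq_bot h]
  exact map_subtype_derivedSeries_le k

theorem derivedSeries_unitriangularFiltration_ne_bot [Nontrivial R] {k : ℕ} (h : 2 ^ k < n) :
    derivedSeries (unitriangularFiltration R n 1) k ≠ ⊥ := by
  intro hbot
  let i : Fin n := ⟨0, Nat.zero_lt_of_lt h⟩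
  let j : Fin n := ⟨2 ^ k, h⟩
  have hij : i ≠ j := Fin.ne_of_lt (Fin.lt_def.2 (Nat.two_pow_pos k))
  have hmem := transvectionUnit_mem_map_subtype_derivedSeries k hij (by simp [i, j]) (1 : R)
  rw [hbot, Subgroup.map_bot, Subgroup.mem_bot] at hmem
  have hentry := congrArg (fun M : GL (Fin n) R => (M : Matrix (Fin n) (Fin n) R) i j) hmem
  simp [transvectionUnit, transvection, one_apply_ne hij] at hentry

theorem derivedLengthEq_unitriangularFiltration [Nontrivial R] (hn : 2 ≤ n) :
    DerivedLengthEq (unitriangularFiltration R n 1) (Nat.log 2 (n - 1) + 1) := by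
  refine ⟨derivedSeries_unitriangularFiltration_eq_bot ?_,
    fun k hk => derivedSeries_unitriangularFiltration_ne_bot ?_⟩
  · have := Nat.lt_pow_succ_log_self one_lt_two (n - 1)
    omega
  · calc 2 ^ k ≤ 2 ^ Nat.log 2 (n - 1) := Nat.pow_le_pow_right two_pos (by omega)
      _ ≤ n - 1 := Nat.pow_log_le_self 2 (by omega)
      _ < n := by omega

end DerivedSeries

theorem unitriangularGroup_eq_unitriangularFiltration (p n : ℕ) [Fact p.Prime] :
    unitriangularGroup p n = unitriangularFiltration (ZMod p) n 1 :=
  Subgroup.ext fun _ => isUnitriangular_iff_vanishesBelowSuperdiag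

/-- For a prime `p` and `n ≥ 2`, the group `Uₙ` of `n × n` upper unitriangular matrices
over `F_p` has order `p^(n(n−1)/2)` (hence composition length `n(n−1)/2`) and derived
length exactly `⌊log₂(n−1)⌋ + 1`. -/
theorem unitriangularGroup_card_and_derived_length (p n : ℕ) [Fact p.Prime] (hn : 2 ≤ n) :
    Nat.card (unitriangularGroup p n) = p ^ (n * (n - 1) / 2) ∧
      Omega (Nat.card (unitriangularGroup p n)) = n * (n - 1) / 2 ∧
      DerivedLengthEq (unitriangularGroup p n) (Nat.log 2 (n - 1) + 1) := by
  have hcard : Nat.card (unitriangularGroup p n) = p ^ (n * (n - 1) / 2) := by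
    rw [unitriangularGroup_eq_unitriangularFiltration, card_unitriangularFiltration_one,
      Nat.card_zmod]
  refine ⟨hcard, ?_, ?_⟩
  · rw [hcard, Omega, (Fact.out : p.Prime).primeFactorsList_pow, List.length_replicate]
  · rw [unitriangularGroup_eq_unitriangularFiltration]
    exact derivedLengthEq_unitriangularFiltration hn
end
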